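/- Let H be an index-two normal subgroup of a finite group K and let U be an irreducible real H-module of quaternionic type whose character is K-invariant. If U admits a K-extension, then either there are exactly two non-isomorphic K-extensions both of quaternionic type, or there is a unique K-extension of complex type, and not both. -/

import Mathlib

open Module

/-- Restriction of a representation to a subgroup. -/
def resRep {K : Type*} [Group K] (H : Subgroup K) {U : Type*} [AddCommGroup U] [Module ℝ U]
    (ψ : Representation ℝ K U) : Representation ℝ H U :=
  ψ.comp H.subtype

/-- A representation is irreducible: nonzero space and no proper nonzero invariant submodule. -/
def IsIrreducibleRep {G U : Type*} [Group G] [AddCommGroup U] [Module ℝ U]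
    (ρ : Representation ℝ G U) : Prop :=
  (∃ u : U, u ≠ 0) ∧
    ∀ p : Submodule ℝ U, (∀ (g : G) (u : U), u ∈ p → ρ g u ∈ p) → p = ⊥ ∨ p = ⊤

/-- The space of equivariant linear maps between two representations. -/
def repHom {G U V : Type*} [Group G] [AddCommGroup U] [Module ℝ U] [AddCommGroup V]
    [Module ℝ V] (ρ : Representation ℝ G U) (ψ : Representation ℝ G V) :
    Submodule ℝ (U →ₗ[ℝ] V) where
  carrier := {f | ∀ (g : G) (u : U), f (ρ g u) = ψ g (f u)}
  add_mem' := by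
    intro f f' hf hf' g u
    simp [hf g u, hf' g u]
  zero_mem' := by intro g u; simp
  smul_mem' := by
    intro c f hf g u
    simp [hf g u]

/-- Isomorphism of representations. -/
def RepIso {G U V : Type*} [Group G] [AddCommGroup U] [Module ℝ U] [AddCommGroup V]
    [Module ℝ V] (ρ : Representation ℝ G U) (ψ : Representation ℝ G V) : Prop :=
  ∃ e : U ≃ₗ[ℝ] V, ∀ (g : G) (u : U), e (ρ g u) = ψ g (e u)

/-- The character of a representation of a subgroup is invariant under conjugation by the
ambient group. -/
def charConjInvariant {K U : Type*} [Group K] [AddCommGroup U] [Module ℝ U] (H : Subgroup K)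
    (ρ : Representation ℝ H U) : Prop :=
  ∀ (g : K) (h k : H), (k : K) = g⁻¹ * h * g →
    LinearMap.trace ℝ U (ρ k) = LinearMap.trace ℝ U (ρ h)

/-- The carrier of the induced representation `Ind_H^K U`. -/
def indSubmodule {K U : Type*} [Group K] [AddCommGroup U] [Module ℝ U] (H : Subgroup K)
    (ρ : Representation ℝ H U) : Submodule ℝ (K → U) where
  carrier := {f | ∀ (h : H) (k : K), f (h * k) = ρ h (f k)}
  add_mem' := by
    intro f f' hf hf' h k
    simp [hf h k, hf' h k]
  zero_mem' := by intro h k; simp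
  smul_mem' := by
    intro c f hf h k
    simp [hf h k]

/-- The induced representation `Ind_H^K U`. -/
def indRep {K U : Type*} [Group K] [AddCommGroup U] [Module ℝ U] (H : Subgroup K)
    (ρ : Representation ℝ H U) : Representation ℝ K (indSubmodule H ρ) where
  toFun g :=
    { toFun := fun f => ⟨fun k => f.1 (k * g), by
        intro h k
        dsimp only
        rw [mul_assoc]
        exact f.2 h (k * g)⟩
      map_add' := by intro f f'; rfl
      map_smul' := by intro c f; rfl }
  map_one' := by
    refine LinearMap.ext fun f => Subtype.ext (funext fun k => ?_)
    simp
  map_mul' := by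
    intro g g'
    refine LinearMap.ext fun f => Subtype.ext (funext fun k => ?_)
    simp [mul_assoc]

/-- The direct sum of two copies of a representation. -/
def doubleRep {G U : Type*} [Group G] [AddCommGroup U] [Module ℝ U]
    (ρ : Representation ℝ G U) : Representation ℝ G (U × U) where
  toFun g := (ρ g).prodMap (ρ g)
  map_one' := by
    refine LinearMap.ext fun u => ?_
    simp
  map_mul' := by
    intro g g'
    refine LinearMap.ext fun u => ?_
    simp [Module.End.mul_apply]

/-- The real dimension of the space of equivariant linear maps. -/
noncomputable def dimRepHom {G U V : Type*} [Group G] [AddCommGroup U] [Module ℝ U]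
    [AddCommGroup V] [Module ℝ V] (ρ : Representation ℝ G U)
    (ψ : Representation ℝ G V) : ℕ :=
  Module.finrank ℝ (repHom ρ ψ)

/-!
Normalise an extension `σ` so that it restricts to `ρ` on the nose, and let `σ'` be its twist by
the sign character of `K/H`. For another such extension `τ` and `g ∉ H`, the map
`c ↦ σ(g)⁻¹ c τ(g)` is an involution of `E = End_H ρ` whose `±1`-eigenspaces are `Hom_K(τ, σ)` and
`Hom_K(τ, σ')`. Since `E ≠ 0` and nonzero elements of `E` are invertible (Schur), `τ ≅ σ` or
`τ ≅ σ'`; for `τ = σ` we get `dim End_K σ + dim Hom_K(σ, σ') = dim E = 4`. If `σ ≇ σ'` the second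
term vanishes and `σ`, `σ'` are the two quaternionic extensions. Otherwise composing with an
isomorphism `σ ≅ σ'` makes both terms equal to `2`, and `σ` is the unique extension.
-/

section General

variable {G : Type*} [Group G] {U V W : Type*} [AddCommGroup U] [Module ℝ U]
  [AddCommGroup V] [Module ℝ V] [AddCommGroup W] [Module ℝ W]

@[simp]
theorem resRep_apply (H : Subgroup G) (ψ : Representation ℝ G U) (h : H) :
    resRep H ψ h = ψ h :=
  rfl

theorem repIso_iff_nonempty_equiv {ρ : Representation ℝ G U} {ψ : Representation ℝ G V} :
    RepIso ρ ψ ↔ Nonempty (ρ.Equiv ψ) :=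
  ⟨fun ⟨e, he⟩ => ⟨.mk e fun g => LinearMap.ext (he g)⟩,
    fun ⟨φ⟩ => ⟨φ.toLinearEquiv, φ.isIntertwining⟩⟩

theorem RepIso.refl (ρ : Representation ℝ G U) : RepIso ρ ρ :=
  repIso_iff_nonempty_equiv.2 ⟨.refl ρ⟩

theorem RepIso.symm {ρ : Representation ℝ G U} {ψ : Representation ℝ G V} (h : RepIso ρ ψ) :
    RepIso ψ ρ :=
  repIso_iff_nonempty_equiv.2 ((repIso_iff_nonempty_equiv.1 h).map .symm)

theorem RepIso.trans {ρ : Representation ℝ G U} {ψ : Representation ℝ G V}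
    {χ : Representation ℝ G W} (h : RepIso ρ ψ) (h' : RepIso ψ χ) : RepIso ρ χ := by
  obtain ⟨φ⟩ := repIso_iff_nonempty_equiv.1 h
  obtain ⟨φ'⟩ := repIso_iff_nonempty_equiv.1 h'
  exact repIso_iff_nonempty_equiv.2 ⟨φ.trans φ'⟩

theorem repIso_of_mem_repHom {ρ : Representation ℝ G U} {ψ : Representation ℝ G V}
    {f : U →ₗ[ℝ] V} (hf : f ∈ repHom ρ ψ) (hbij : Function.Bijective f) : RepIso ρ ψ :=
  ⟨LinearEquiv.ofBijective f hbij, hf⟩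

theorem IsIrreducibleRep.bijective_of_mem_repHom {ρ : Representation ℝ G U}
    (hρ : IsIrreducibleRep ρ) {f : U →ₗ[ℝ] U} (hf : f ∈ repHom ρ ρ) (hf0 : f ≠ 0) :
    Function.Bijective f := by
  have hker : LinearMap.ker f = ⊥ := by
    refine (hρ.2 _ fun g u hu => ?_).resolve_right (mt LinearMap.ker_eq_top.1 hf0)
    rw [LinearMap.mem_ker] at hu ⊢
    rw [hf, hu, map_zero]
  have hrange : LinearMap.range f = ⊤ := by
    refine (hρ.2 _ fun g u hu => ?_).resolve_left (mt LinearMap.range_eq_bot.1 hf0)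
    obtain ⟨v, rfl⟩ := hu
    exact ⟨ρ g v, hf g v⟩
  exact ⟨LinearMap.ker_eq_bot.1 hker, LinearMap.range_eq_top.1 hrange⟩

theorem repHom_le_repHom_resRep (H : Subgroup G) (τ : Representation ℝ G U)
    (σ : Representation ℝ G V) : repHom τ σ ≤ repHom (resRep H τ) (resRep H σ) :=
  fun _ hf h => hf h

theorem exists_repIso_resRep_eq {H : Subgroup G} {ψ : Representation ℝ G W}
    {ρ : Representation ℝ H U} (h : RepIso (resRep H ψ) ρ) :
    ∃ τ : Representation ℝ G U, RepIso ψ τ ∧ resRep H τ = ρ := by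
  obtain ⟨e, he⟩ := h
  refine ⟨e.conjRingEquiv.toMonoidHom.comp ψ, ⟨e, fun g u => ?_⟩, ?_⟩
  · simp [LinearEquiv.conjRingEquiv]
  · ext h u
    simpa [LinearEquiv.conjRingEquiv] using he h (e.symm u)

theorem repIso_of_repHom_ne_bot {H : Subgroup G} {τ σ : Representation ℝ G U}
    (hirr : IsIrreducibleRep (resRep H σ)) (hτσ : resRep H τ = resRep H σ)
    (hne : repHom τ σ ≠ ⊥) : RepIso τ σ := by
  obtain ⟨f, hf, hf0⟩ := (Submodule.ne_bot_iff _).1 hne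
  have hfE : f ∈ repHom (resRep H σ) (resRep H σ) := hτσ ▸ repHom_le_repHom_resRep H τ σ hf
  exact repIso_of_mem_repHom hf (hirr.bijective_of_mem_repHom hfE hf0)

theorem dimRepHom_congr_right {τ : Representation ℝ G U} {χ : Representation ℝ G V}
    {χ' : Representation ℝ G W} (h : RepIso χ χ') : dimRepHom τ χ = dimRepHom τ χ' := by
  obtain ⟨e, he⟩ := h
  have hcomap :
      repHom τ χ = (repHom τ χ').comap (LinearEquiv.congrRight (M := U) e).toLinearMap := by
    ext f
    refine forall₂_congr fun g u => ?_
    change _ ↔ e (f (τ g u)) = χ' g (e (f u))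
    rw [← he, e.injective.eq_iff]
  rw [dimRepHom, dimRepHom, hcomap, Submodule.comap_equiv_eq_map_symm, LinearEquiv.finrank_map_eq]

noncomputable def twistRep (χ : G →* ℝ) (σ : Representation ℝ G U) : Representation ℝ G U where
  toFun g := χ g • σ g
  map_one' := by simp
  map_mul' g g' := by simp only [map_mul, smul_mul_smul_comm]

@[simp]
theorem twistRep_apply (χ : G →* ℝ) (σ : Representation ℝ G U) (g : G) :
    twistRep χ σ g = χ g • σ g :=
  rfl

theorem repHom_twistRep_twistRep (χ : G →* ℝ) (τ : Representation ℝ G U)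
    (σ : Representation ℝ G V) : repHom (twistRep χ τ) (twistRep χ σ) = repHom τ σ := by
  ext f
  refine forall₂_congr fun g u => ?_
  have hχ : χ g ≠ 0 := by simpa using (χ.toHomUnits g).ne_zero
  simp only [twistRep_apply, LinearMap.smul_apply, map_smul]
  exact (smul_right_injective V hχ).eq_iff

section Conj

variable {H : Subgroup G} {τ σ : Representation ℝ G U} (hτσ : resRep H τ = resRep H σ)
  {c : Module.End ℝ U}
include hτσ

theorem apply_eq_apply_of_resRep_eq {k : G} (hk : k ∈ H) : τ k = σ k :=
  DFunLike.congr_fun hτσ ⟨k, hk⟩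

theorem conj_mem_repHom_resRep [H.Normal] (g : G) (hc : c ∈ repHom (resRep H σ) (resRep H σ)) :
    σ g⁻¹ * c * τ g ∈ repHom (resRep H σ) (resRep H σ) := by
  intro k
  have hk : g * k * g⁻¹ ∈ H := Subgroup.Normal.conj_mem ‹_› _ k.2 g
  have e1 : τ g * σ k = σ (g * k * g⁻¹) * τ g := by
    rw [← apply_eq_apply_of_resRep_eq hτσ k.2, ← apply_eq_apply_of_resRep_eq hτσ hk, ← map_mul,
      ← map_mul, inv_mul_cancel_right]
  have e2 : σ g⁻¹ * σ (g * k * g⁻¹) = σ k * σ g⁻¹ := by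
    rw [← map_mul, ← map_mul]
    congr 1
    group
  have e3 : c * σ (g * k * g⁻¹) = σ (g * k * g⁻¹) * c := LinearMap.ext (hc ⟨_, hk⟩)
  refine LinearMap.congr_fun (?_ : σ g⁻¹ * c * τ g * σ k = σ k * (σ g⁻¹ * c * τ g))
  calc σ g⁻¹ * c * τ g * σ k = σ g⁻¹ * (c * σ (g * k * g⁻¹)) * τ g := by
        rw [mul_assoc, e1]; simp only [mul_assoc]
    _ = σ k * (σ g⁻¹ * c * τ g) := by rw [e3, ← mul_assoc, e2]; simp only [mul_assoc]

theorem conj_mul_eq_of_mul_self_mem {g : G} (hgg : g * g ∈ H)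
    (hc : c ∈ repHom (resRep H σ) (resRep H σ)) : σ g⁻¹ * c * τ g * τ g = σ g * c := by
  have e : c * σ (g * g) = σ (g * g) * c := LinearMap.ext (hc ⟨_, hgg⟩)
  rw [mul_assoc, ← map_mul, apply_eq_apply_of_resRep_eq hτσ hgg, mul_assoc, e, ← mul_assoc,
    ← map_mul, inv_mul_cancel_left]

end Conj

end General

section IndexTwo

variable {K : Type*} [Group K] {H : Subgroup K} (hidx : H.index = 2) {U V : Type*}
  [AddCommGroup U] [Module ℝ U] [AddCommGroup V] [Module ℝ V]

open Classical in
noncomputable def indexTwoSign : K →* ℝ where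
  toFun g := if g ∈ H then 1 else -1
  map_one' := if_pos H.one_mem
  map_mul' a b := by
    simp only [Subgroup.mul_mem_iff_of_index_two hidx]
    split_ifs <;> simp_all

include hidx in
theorem exists_notMem_of_index_eq_two : ∃ g, g ∉ H :=
  SetLike.exists_not_mem_of_ne_top H fun h => by simp [h] at hidx

theorem resRep_twistRep_indexTwoSign (σ : Representation ℝ K U) :
    resRep H (twistRep (indexTwoSign hidx) σ) = resRep H σ := by
  ext h u
  simp [indexTwoSign]

theorem twistRep_indexTwoSign_of_notMem (σ : Representation ℝ K U) {g : K} (hg : g ∉ H) :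
    twistRep (indexTwoSign hidx) σ g = -σ g := by
  simp [indexTwoSign, hg]

include hidx in
theorem mem_repHom_iff_of_index_two {g : K} (hg : g ∉ H) {τ : Representation ℝ K U}
    {σ : Representation ℝ K V} {f : U →ₗ[ℝ] V} :
    f ∈ repHom τ σ ↔ f ∈ repHom (resRep H τ) (resRep H σ) ∧ f ∘ₗ τ g = σ g ∘ₗ f := by
  refine ⟨fun hf => ⟨fun h => hf h, LinearMap.ext (hf g)⟩, fun ⟨hres, hfg⟩ k u => ?_⟩
  by_cases hk : k ∈ H
  · exact hres ⟨k, hk⟩ u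
  have hkg : k * g⁻¹ ∈ H :=
    (Subgroup.mul_mem_iff_of_index_two hidx).2 (iff_of_false hk (inv_mem_iff.not.2 hg))
  calc f (τ k u) = f (τ (k * g⁻¹) (τ g u)) := by
        rw [← Module.End.mul_apply, ← map_mul, inv_mul_cancel_right]
    _ = σ (k * g⁻¹) (f (τ g u)) := hres ⟨_, hkg⟩ (τ g u)
    _ = σ k (f u) := by
        rw [← LinearMap.comp_apply f, hfg, LinearMap.comp_apply, ← Module.End.mul_apply, ← map_mul,
          inv_mul_cancel_right]

theorem repHom_inf_repHom_twistRep (τ : Representation ℝ K U) (σ : Representation ℝ K V) :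
    repHom τ σ ⊓ repHom τ (twistRep (indexTwoSign hidx) σ) = ⊥ := by
  obtain ⟨g, hg⟩ := exists_notMem_of_index_eq_two hidx
  refine eq_bot_iff.2 fun f ⟨hf, hf'⟩ => ?_
  have hgf : σ g ∘ₗ f = -(σ g ∘ₗ f) := by
    rw [← LinearMap.neg_comp, ← twistRep_indexTwoSign_of_notMem hidx σ hg,
      ← ((mem_repHom_iff_of_index_two hidx hg).1 hf).2,
      ((mem_repHom_iff_of_index_two hidx hg).1 hf').2]
  ext u
  have h2 : (2 : ℝ) • σ g (f u) = 0 := by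
    have hu : σ g (f u) = -σ g (f u) := LinearMap.congr_fun hgf u
    rw [two_smul]
    nth_rw 1 [hu]
    exact neg_add_cancel _
  simpa using congrArg (σ g⁻¹) ((smul_eq_zero.1 h2).resolve_left two_ne_zero)

theorem repHom_sup_repHom_twistRep {τ σ : Representation ℝ K U}
    (hτσ : resRep H τ = resRep H σ) :
    repHom τ σ ⊔ repHom τ (twistRep (indexTwoSign hidx) σ) =
      repHom (resRep H σ) (resRep H σ) := by
  have := Subgroup.normal_of_index_eq_two hidx
  obtain ⟨g, hg⟩ := exists_notMem_of_index_eq_two hidx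
  have hgg : g * g ∈ H := (Subgroup.mul_mem_iff_of_index_two hidx).2 Iff.rfl
  have hσβ (c : Module.End ℝ U) : σ g * (σ g⁻¹ * c * τ g) = c * τ g := by
    simp only [← mul_assoc, ← map_mul, mul_inv_cancel, map_one, one_mul]
  refine le_antisymm (sup_le ?_ ?_) fun c hc => ?_
  · exact (repHom_le_repHom_resRep H τ σ).trans_eq (by rw [hτσ])
  · exact (repHom_le_repHom_resRep H τ _).trans_eq (by rw [hτσ, resRep_twistRep_indexTwoSign])
  have hβ := conj_mem_repHom_resRep hτσ g hc
  refine Submodule.mem_sup.2 ⟨(2⁻¹ : ℝ) • (c + σ g⁻¹ * c * τ g), ?_,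
    (2⁻¹ : ℝ) • (c - σ g⁻¹ * c * τ g), ?_, by module⟩
  · rw [mem_repHom_iff_of_index_two hidx hg, hτσ]
    refine ⟨Submodule.smul_mem _ _ (add_mem hc hβ), ?_⟩
    change (2⁻¹ : ℝ) • (c + σ g⁻¹ * c * τ g) * τ g = σ g * ((2⁻¹ : ℝ) • (c + σ g⁻¹ * c * τ g))
    rw [smul_mul_assoc, mul_smul_comm, add_mul, conj_mul_eq_of_mul_self_mem hτσ hgg hc, ← hσβ c,
      mul_add, add_comm]
  · rw [mem_repHom_iff_of_index_two hidx hg, resRep_twistRep_indexTwoSign, hτσ,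
      twistRep_indexTwoSign_of_notMem hidx σ hg]
    refine ⟨Submodule.smul_mem _ _ (sub_mem hc hβ), ?_⟩
    change (2⁻¹ : ℝ) • (c - σ g⁻¹ * c * τ g) * τ g = -σ g * ((2⁻¹ : ℝ) • (c - σ g⁻¹ * c * τ g))
    rw [smul_mul_assoc, mul_smul_comm, sub_mul, conj_mul_eq_of_mul_self_mem hτσ hgg hc, ← hσβ c,
      neg_mul, mul_sub, neg_sub]

theorem dimRepHom_add_dimRepHom_twistRep [FiniteDimensional ℝ U] {τ σ : Representation ℝ K U}
    (hτσ : resRep H τ = resRep H σ) :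
    dimRepHom τ σ + dimRepHom τ (twistRep (indexTwoSign hidx) σ) =
      dimRepHom (resRep H σ) (resRep H σ) := by
  have h := Submodule.finrank_sup_add_finrank_inf_eq (repHom τ σ)
    (repHom τ (twistRep (indexTwoSign hidx) σ))
  rw [repHom_sup_repHom_twistRep hidx hτσ, repHom_inf_repHom_twistRep, finrank_bot,
    add_zero] at h
  exact h.symm

theorem repIso_or_repIso_twistRep {W : Type*} [AddCommGroup W] [Module ℝ W]
    {ψ : Representation ℝ K W} {σ : Representation ℝ K U} (hirr : IsIrreducibleRep (resRep H σ))
    (hψ : RepIso (resRep H ψ) (resRep H σ)) :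
    RepIso ψ σ ∨ RepIso ψ (twistRep (indexTwoSign hidx) σ) := by
  obtain ⟨τ, hψτ, hτσ⟩ := exists_repIso_resRep_eq hψ
  refine Or.imp hψτ.trans hψτ.trans ?_
  have hE : repHom (resRep H σ) (resRep H σ) ≠ ⊥ := by
    obtain ⟨u, hu⟩ := hirr.1
    refine (Submodule.ne_bot_iff _).2 ⟨LinearMap.id, fun _ _ => rfl, fun h => hu ?_⟩
    simpa using LinearMap.congr_fun h u
  rw [← repHom_sup_repHom_twistRep hidx hτσ] at hE
  by_cases h : repHom τ σ = ⊥
  · rw [h, bot_sup_eq] at hE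
    have hres := resRep_twistRep_indexTwoSign hidx σ
    exact .inr (repIso_of_repHom_ne_bot (hres ▸ hirr) (hτσ.trans hres.symm) hE)
  · exact .inl (repIso_of_repHom_ne_bot hirr hτσ h)

end IndexTwo

theorem extensions_of_quaternionic_type_general {K : Type} [Group K] (H : Subgroup K)
    (hidx : H.index = 2) {U : Type} [AddCommGroup U] [Module ℝ U]
    [FiniteDimensional ℝ U] (ρ : Representation ℝ H U) (hirr : IsIrreducibleRep ρ)
    (hquat : dimRepHom ρ ρ = 4)
    (hext : ∃ σ : Representation ℝ K U, RepIso (resRep H σ) ρ) :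
    Xor'
      (∃ σ₁ σ₂ : Representation ℝ K U,
        RepIso (resRep H σ₁) ρ ∧ RepIso (resRep H σ₂) ρ ∧ ¬ RepIso σ₁ σ₂ ∧
        dimRepHom σ₁ σ₁ = 4 ∧ dimRepHom σ₂ σ₂ = 4 ∧
        ∀ (W : Type) [AddCommGroup W] [Module ℝ W] (ψ : Representation ℝ K W),
          RepIso (resRep H ψ) ρ → (RepIso ψ σ₁ ∨ RepIso ψ σ₂))
      (∃ σ : Representation ℝ K U,
        RepIso (resRep H σ) ρ ∧ dimRepHom σ σ = 2 ∧
        ∀ (W : Type) [AddCommGroup W] [Module ℝ W] (ψ : Representation ℝ K W),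
          RepIso (resRep H ψ) ρ → RepIso ψ σ) := by
  obtain ⟨σ₀, hσ₀⟩ := hext
  obtain ⟨σ, -, rfl⟩ := exists_repIso_resRep_eq hσ₀
  set σ' := twistRep (indexTwoSign hidx) σ
  have hres : resRep H σ' = resRep H σ := resRep_twistRep_indexTwoSign hidx σ
  have hdim : dimRepHom σ σ + dimRepHom σ σ' = 4 :=
    (dimRepHom_add_dimRepHom_twistRep hidx rfl).trans hquat
  by_cases hσσ' : RepIso σ σ'
  · have huniq (W : Type) [AddCommGroup W] [Module ℝ W] (ψ : Representation ℝ K W)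
        (hψ : RepIso (resRep H ψ) (resRep H σ)) : RepIso ψ σ :=
      (repIso_or_repIso_twistRep hidx hirr hψ).elim id (·.trans hσσ'.symm)
    have h2 : dimRepHom σ σ = 2 := by
      rw [← dimRepHom_congr_right hσσ'] at hdim
      omega
    refine .inr ⟨⟨σ, .refl _, h2, huniq⟩, ?_⟩
    rintro ⟨σ₁, σ₂, h₁, h₂, h₁₂, -⟩
    exact h₁₂ ((huniq _ σ₁ h₁).trans (huniq _ σ₂ h₂).symm)
  · have h0 : dimRepHom σ σ' = 0 := by
      by_contra h
      refine hσσ' (repIso_of_repHom_ne_bot (hres ▸ hirr) hres.symm fun hbot => h ?_)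
      rw [dimRepHom, hbot, finrank_bot]
    have h' : dimRepHom σ' σ' = dimRepHom σ σ := by
      rw [dimRepHom, dimRepHom, repHom_twistRep_twistRep]
    have hσ' : RepIso (resRep H σ') (resRep H σ) := hres ▸ .refl _
    refine .inl ⟨⟨σ, σ', .refl _, hσ', hσσ', by omega, by omega,
      fun _ _ _ _ => repIso_or_repIso_twistRep hidx hirr⟩, ?_⟩
    rintro ⟨σ₁, -, -, huniq⟩
    exact hσσ' ((huniq _ σ (.refl _)).trans (huniq _ σ' hσ').symm)

/-- Let `H` be an index-two normal subgroup of a finite group `K` and `U`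
an irreducible real `H`-module of quaternionic type (`d(U) = 4`) with `K`-invariant
character.  If `U` admits a `K`-extension, then either there are exactly two non-isomorphic
`K`-extensions, both of quaternionic type, or there is a unique `K`-extension, of complex
type, and not both. -/
theorem extensions_of_quaternionic_type {K : Type} [Group K] [Finite K] (H : Subgroup K)
    [H.Normal] (hidx : H.index = 2) {U : Type} [AddCommGroup U] [Module ℝ U]
    [FiniteDimensional ℝ U] (ρ : Representation ℝ H U) (hirr : IsIrreducibleRep ρ)
    (hquat : dimRepHom ρ ρ = 4) (hinv : charConjInvariant H ρ)
    (hext : ∃ σ : Representation ℝ K U, RepIso (resRep H σ) ρ) :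
    Xor'
      (∃ σ₁ σ₂ : Representation ℝ K U,
        RepIso (resRep H σ₁) ρ ∧ RepIso (resRep H σ₂) ρ ∧ ¬ RepIso σ₁ σ₂ ∧
        dimRepHom σ₁ σ₁ = 4 ∧ dimRepHom σ₂ σ₂ = 4 ∧
        ∀ (W : Type) [AddCommGroup W] [Module ℝ W] (ψ : Representation ℝ K W),
          RepIso (resRep H ψ) ρ → (RepIso ψ σ₁ ∨ RepIso ψ σ₂))
      (∃ σ : Representation ℝ K U,
        RepIso (resRep H σ) ρ ∧ dimRepHom σ σ = 2 ∧
        ∀ (W : Type) [AddCommGroup W] [Module ℝ W] (ψ : Representation ℝ K W),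
          RepIso (resRep H ψ) ρ → RepIso ψ σ) :=
  extensions_of_quaternionic_type_general H hidx ρ hirr hquat hext
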